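/- Let r_1,...,r_m be independent uniformly random elements of F_q and let Q be a multilinear homogeneous polynomial of degree k ≤ m over F_q with not all coefficients zero. Then P(Q(r_1,...,r_m) = 0) ≥ (1/q)·(1 − 1/q)^{k-1}. -/

import Mathlib

/-!
Pick a variable `y j` occurring in a nonzero monomial of `Q` and write `Q = y j * G + R` with
`G`, `R` free of `y j`; then `G` is a nonzero multilinear polynomial of degree `k - 1`. On each
line in direction `j` through a point where `G ≠ 0`, `Q` is a nonconstant affine function of
`y j`, so it vanishes at exactly one of the `q` points of the line: `#Z ≥ #{G ≠ 0} / q`. The same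
fibre count, run as an induction on the degree, shows that a nonzero multilinear polynomial of
degree `≤ d` is nonzero on at least a `(1 - 1/q)^d` fraction of `F^m`.
-/

open Finset Function

section Multilinear

variable {ι R : Type*} [Fintype ι] [DecidableEq ι] [CommRing R]

def mlEval (δ : Finset ι → R) (y : ι → R) : R :=
  ∑ I, δ I * ∏ i ∈ I, y i

def mlDeriv (j : ι) (δ : Finset ι → R) (J : Finset ι) : R :=
  if j ∈ J then 0 else δ (insert j J)

omit [Fintype ι] in
lemma mlDeriv_ne_zero {j : ι} {δ : Finset ι → R} {I : Finset ι} (hI : δ I ≠ 0) (hj : j ∈ I) :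
    mlDeriv j δ ≠ 0 :=
  fun h => hI (by simpa [mlDeriv, insert_erase hj] using congrFun h (I.erase j))

omit [Fintype ι] in
lemma card_le_of_mlDeriv_ne_zero {j : ι} {δ : Finset ι → R} {d : ℕ}
    (hdeg : ∀ I, δ I ≠ 0 → #I ≤ d + 1) : ∀ J, mlDeriv j δ J ≠ 0 → #J ≤ d := by
  intro J h
  unfold mlDeriv at h
  split_ifs at h with hj
  · exact absurd rfl h
  · simpa [card_insert_of_notMem hj] using hdeg _ h

lemma sum_finset_eq_sum_powerset_erase {M : Type*} [AddCommMonoid M] (j : ι)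
    (f : Finset ι → M) :
    ∑ I, f I = ∑ t ∈ (univ.erase j).powerset, (f t + f (insert j t)) := by
  conv_lhs => rw [← powerset_univ, ← insert_erase (mem_univ j)]
  rw [sum_powerset_insert (notMem_erase j univ), sum_add_distrib]

lemma mlEval_update (δ : Finset ι → R) (y : ι → R) (j : ι) (c : R) :
    mlEval δ (update y j c) = c * mlEval (mlDeriv j δ) y + mlEval δ (update y j 0) := by
  simp only [mlEval]
  rw [sum_finset_eq_sum_powerset_erase j, sum_finset_eq_sum_powerset_erase j,
    sum_finset_eq_sum_powerset_erase j, mul_sum, ← sum_add_distrib]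
  refine sum_congr rfl fun t ht => ?_
  have hj : j ∉ t := fun h => notMem_erase j univ (mem_powerset.mp ht h)
  simp [mlDeriv, hj, prod_insert hj, prod_update_of_notMem hj]
  ring

lemma mlEval_mlDeriv_update (δ : Finset ι → R) (y : ι → R) (j : ι) (c : R) :
    mlEval (mlDeriv j δ) (update y j c) = mlEval (mlDeriv j δ) y := by
  refine sum_congr rfl fun J _ => ?_
  by_cases hj : j ∈ J
  · simp [mlDeriv, hj]
  · rw [prod_update_of_notMem hj]

omit [DecidableEq ι] in
lemma mlEval_eq_of_forall_nonempty_eq_zero (δ : Finset ι → R)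
    (h : ∀ I : Finset ι, I.Nonempty → δ I = 0) (y : ι → R) : mlEval δ y = δ ∅ := by
  rw [mlEval, sum_eq_single ∅ (fun I _ hI => by simp [h I (nonempty_iff_ne_empty.mpr hI)])
    (by simp)]
  simp

end Multilinear

section Fibres

variable {ι β : Type*} [Fintype ι] [DecidableEq ι] [Fintype β]

lemma card_filter_and_mul_card (j : ι) {P R : (ι → β) → Prop} [DecidablePred P] [DecidablePred R]
    (hP : ∀ y c, P (update y j c) ↔ P y) {N : ℕ}
    (hN : ∀ y, P y → #{c | R (update y j c)} = N) :
    #{y | P y ∧ R y} * Fintype.card β = N * #{y | P y} := by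
  -- `(y, c) ↦ (update y j c, y j)` is an involution, so it moves the count along fibres in
  -- direction `j` onto the count of points.
  let e : Equiv.Perm ((ι → β) × β) := Involutive.toPerm
    (fun p => (update p.1 j p.2, p.1 j)) (fun p => by simp)
  have hswap := Equiv.sum_comp e (fun p : (ι → β) × β => if P p.1 ∧ R p.1 then 1 else 0)
  simp only [e, Involutive.toPerm, Equiv.coe_fn_mk, Fintype.sum_prod_type, hP] at hswap
  calc #{y | P y ∧ R y} * Fintype.card β
      = ∑ y, ∑ _c : β, if P y ∧ R y then 1 else 0 := by
        rw [card_filter, sum_mul]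
        exact sum_congr rfl fun y _ => by simp
    _ = ∑ y, if P y then #{c | R (update y j c)} else 0 := by
        rw [← hswap]
        refine sum_congr rfl fun y _ => ?_
        split_ifs with h <;> simp [h]
    _ = N * #{y | P y} := by
        rw [card_filter, mul_sum]
        exact sum_congr rfl fun y _ => by by_cases h : P y <;> simp [h, hN]

end Fibres

section FiniteField

variable {F : Type*} [Field F] [Fintype F] [DecidableEq F]

lemma card_filter_mul_add_eq_zero {a : F} (ha : a ≠ 0) (b : F) : #{c | c * a + b = 0} = 1 :=
  card_eq_one.mpr ⟨-b / a, by ext c; simp [eq_div_iff ha, add_eq_zero_iff_eq_neg]⟩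

lemma card_filter_mul_add_ne_zero {a : F} (ha : a ≠ 0) (b : F) :
    #{c | c * a + b ≠ 0} = Fintype.card F - 1 := by
  rw [filter_not, card_sdiff_of_subset (filter_subset _ _), card_filter_mul_add_eq_zero ha,
    card_univ]

variable {ι : Type*} [Fintype ι] [DecidableEq ι]

lemma card_mlDeriv_ne_zero_and_mlEval_eq_zero_mul_card (j : ι) (δ : Finset ι → F) :
    #{y | mlEval (mlDeriv j δ) y ≠ 0 ∧ mlEval δ y = 0} * Fintype.card F
      = #{y | mlEval (mlDeriv j δ) y ≠ 0} := by
  rw [← one_mul #{y | mlEval (mlDeriv j δ) y ≠ 0}]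
  exact card_filter_and_mul_card j (fun y c => by rw [mlEval_mlDeriv_update])
    (fun y hy => by
      simpa only [← mlEval_update] using card_filter_mul_add_eq_zero hy (mlEval δ (update y j 0)))

lemma card_mlDeriv_ne_zero_and_mlEval_ne_zero_mul_card (j : ι) (δ : Finset ι → F) :
    #{y | mlEval (mlDeriv j δ) y ≠ 0 ∧ mlEval δ y ≠ 0} * Fintype.card F
      = (Fintype.card F - 1) * #{y | mlEval (mlDeriv j δ) y ≠ 0} :=
  card_filter_and_mul_card j (fun y c => by rw [mlEval_mlDeriv_update])
    (fun y hy => by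
      simpa only [← mlEval_update] using card_filter_mul_add_ne_zero hy (mlEval δ (update y j 0)))

theorem pow_mul_le_card_mlEval_ne_zero (d : ℕ) {δ : Finset ι → F}
    (hdeg : ∀ I, δ I ≠ 0 → #I ≤ d) (hδ : δ ≠ 0) :
    (Fintype.card F - 1) ^ d * Fintype.card F ^ Fintype.card ι
      ≤ Fintype.card F ^ d * #{y | mlEval δ y ≠ 0} := by
  set q := Fintype.card F
  induction d generalizing δ with
  | zero =>
    have hconst : ∀ I : Finset ι, I.Nonempty → δ I = 0 := fun I hI =>
      by_contra fun h => hI.ne_empty (card_eq_zero.mp (Nat.le_zero.mp (hdeg I h)))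
    have hempty : δ ∅ ≠ 0 := fun h0 => hδ (funext fun I => by
      rcases I.eq_empty_or_nonempty with rfl | hI
      exacts [h0, hconst I hI])
    simp [mlEval_eq_of_forall_nonempty_eq_zero δ hconst, hempty, q]
  | succ d ih =>
    by_cases hI : ∃ I, δ I ≠ 0 ∧ I.Nonempty
    · obtain ⟨I, hI, j, hj⟩ := hI
      have hsub : #{y | mlEval (mlDeriv j δ) y ≠ 0 ∧ mlEval δ y ≠ 0} ≤ #{y | mlEval δ y ≠ 0} :=
        card_le_card fun y => by simp +contextual
      calc (q - 1) ^ (d + 1) * q ^ Fintype.card ι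
          = (q - 1) * ((q - 1) ^ d * q ^ Fintype.card ι) := by ring
        _ ≤ (q - 1) * (q ^ d * #{y | mlEval (mlDeriv j δ) y ≠ 0}) :=
          Nat.mul_le_mul_left _ (ih (card_le_of_mlDeriv_ne_zero hdeg) (mlDeriv_ne_zero hI hj))
        _ = q ^ d * (#{y | mlEval (mlDeriv j δ) y ≠ 0 ∧ mlEval δ y ≠ 0} * q) := by
          rw [card_mlDeriv_ne_zero_and_mlEval_ne_zero_mul_card]; ring
        _ = q ^ (d + 1) * #{y | mlEval (mlDeriv j δ) y ≠ 0 ∧ mlEval δ y ≠ 0} := by ring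
        _ ≤ q ^ (d + 1) * #{y | mlEval δ y ≠ 0} := Nat.mul_le_mul_left _ hsub
    · simp only [not_exists, not_and, not_nonempty_iff_eq_empty] at hI
      have hdeg' : ∀ I, δ I ≠ 0 → #I ≤ d := fun I h => by simp [hI I h]
      calc (q - 1) ^ (d + 1) * q ^ Fintype.card ι
          = (q - 1) * ((q - 1) ^ d * q ^ Fintype.card ι) := by ring
        _ ≤ q * (q ^ d * #{y | mlEval δ y ≠ 0}) := Nat.mul_le_mul (Nat.sub_le q 1) (ih hdeg' hδ)
        _ = q ^ (d + 1) * #{y | mlEval δ y ≠ 0} := by ring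

theorem pow_mul_le_card_mlEval_eq_zero {d : ℕ} {δ : Finset ι → F}
    (hdeg : ∀ I, δ I ≠ 0 → #I ≤ d + 1) {I : Finset ι} (hI : δ I ≠ 0) (hne : I.Nonempty) :
    (Fintype.card F - 1) ^ d * Fintype.card F ^ Fintype.card ι
      ≤ Fintype.card F ^ (d + 1) * #{y | mlEval δ y = 0} := by
  set q := Fintype.card F
  obtain ⟨j, hj⟩ := hne
  have hsub : #{y | mlEval (mlDeriv j δ) y ≠ 0 ∧ mlEval δ y = 0} ≤ #{y | mlEval δ y = 0} :=
    card_le_card fun y => by simp +contextual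
  calc (q - 1) ^ d * q ^ Fintype.card ι
      ≤ q ^ d * #{y | mlEval (mlDeriv j δ) y ≠ 0} :=
        pow_mul_le_card_mlEval_ne_zero d (card_le_of_mlDeriv_ne_zero hdeg) (mlDeriv_ne_zero hI hj)
    _ = q ^ (d + 1) * #{y | mlEval (mlDeriv j δ) y ≠ 0 ∧ mlEval δ y = 0} := by
        rw [← card_mlDeriv_ne_zero_and_mlEval_eq_zero_mul_card j δ]; ring
    _ ≤ q ^ (d + 1) * #{y | mlEval δ y = 0} := Nat.mul_le_mul_left _ hsub

end FiniteField

theorem prob_zero_lower_general (F : Type) [Field F] [Fintype F] [DecidableEq F]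
    (q : ℕ) (hq : q = Fintype.card F)
    (m k : ℕ) (hk : 1 ≤ k)
    (δ : Finset (Fin m) → F)
    (hδ : ∃ I : Finset (Fin m), I.card = k ∧ δ I ≠ 0) :
    (1 / (q : ℝ)) * (1 - 1 / (q : ℝ)) ^ (k - 1)
      ≤ ((Finset.univ.filter (fun y : Fin m → F =>
          ∑ I ∈ Finset.univ.filter (fun I : Finset (Fin m) => I.card = k),
            δ I * ∏ i ∈ I, y i = 0)).card : ℝ) / (q : ℝ) ^ m := by
  obtain ⟨I₀, hI₀k, hI₀⟩ := hδ
  obtain ⟨d, rfl⟩ : ∃ d, k = d + 1 := ⟨k - 1, by omega⟩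
  set δk : Finset (Fin m) → F := fun I => if #I = d + 1 then δ I else 0
  have hQ : ∀ y : Fin m → F, ∑ I with #I = d + 1, δ I * ∏ i ∈ I, y i = mlEval δk y := fun y => by
    rw [sum_filter]; simp only [mlEval, δk, ite_mul, zero_mul]
  have hcount := pow_mul_le_card_mlEval_eq_zero (d := d) (δ := δk) (fun I h => by simp_all [δk])
    (by simpa [δk, hI₀k] using hI₀) (card_pos.mp (by omega : 0 < #I₀))
  simp only [hQ, Nat.add_sub_cancel, Fintype.card_fin] at hcount ⊢
  subst hq
  have hq1 : 1 ≤ Fintype.card F := Fintype.card_pos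
  have hq0 : (0 : ℝ) < Fintype.card F := by exact_mod_cast hq1
  rw [one_sub_div hq0.ne', div_pow, one_div_mul_eq_div, div_div, ← pow_succ,
    div_le_div_iff₀ (by positivity) (by positivity)]
  exact_mod_cast hcount.trans_eq (mul_comm _ _)

/-- For i.i.d. uniform `r₁,…,r_m` in `F_q` and a nonzero multilinear homogeneous
polynomial `Q` of degree `k ≤ m`, `P(Q(r) = 0) = #Z/q^m ≥ (1/q)(1 − 1/q)^(k-1)`. -/
theorem prob_zero_lower (F : Type) [Field F] [Fintype F] [DecidableEq F]
    (q : ℕ) (hq : q = Fintype.card F)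
    (m k : ℕ) (hk : 1 ≤ k) (hkm : k ≤ m)
    (δ : Finset (Fin m) → F)
    (hδ : ∃ I : Finset (Fin m), I.card = k ∧ δ I ≠ 0) :
    (1 / (q : ℝ)) * (1 - 1 / (q : ℝ)) ^ (k - 1)
      ≤ ((Finset.univ.filter (fun y : Fin m → F =>
          ∑ I ∈ Finset.univ.filter (fun I : Finset (Fin m) => I.card = k),
            δ I * ∏ i ∈ I, y i = 0)).card : ℝ) / (q : ℝ) ^ m :=
  prob_zero_lower_general F q hq m k hk δ hδ
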